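/- Define, for isomorphic levellised n-lattices, the relation L₁ < L₂ by recursion on n: L₁ < L₂ iff L₁' < L₂' (where L' removes the deepest nonzero level), or L₁' = L₂' and the level-major lexicographic comparison of the levellised covering weights of the elements of the deepest level of L₁ is smaller than that of L₂. Then < is a strict total order (transitive and satisfying trichotomy) on each set of pairwise-isomorphic levellised n-lattices. -/

import Mathlib

/-!
Index the covering weights `covwt e j` by the positions `(j, e)` with `0 < j` and
`1 ≤ e < dep j`, ordered by depth of `j`, then decreasing level `e`, then label `j`. Isomorphic
levellised lattices have the same depths on nonzero labels, hence the same finite set of positions,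
and on it `ltLM` is the lexicographic order of weight vectors, which is a linear order. Equal
weight vectors force equal lattices: since `wt` is injective they give the covering sets
levelwise, the top is a cover exactly when nothing else is, and the order is generated by its
covering relation.
-/

namespace PaperLattice

variable {N : ℕ}

/-- Depth: one less than the maximum length of a chain from `t` down to `a` w.r.t. `le`. -/
noncomputable def dep (le : Fin N → Fin N → Prop) (t a : Fin N) : ℕ :=
  sSup {k | ∃ l : List (Fin N), List.Chain' (fun x y => le y x ∧ y ≠ x) l ∧
    l.head? = some t ∧ l.getLast? = some a ∧ l.length = k + 1}

/-- The `d`-th level: elements of depth `d`. -/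
noncomputable def lev (le : Fin N → Fin N → Prop) (t : Fin N) (d : ℕ) : Set (Fin N) :=
  {a | dep le t a = d}

/-- A labelled poset is levellised if depth is monotone in the nonzero labels. -/
def Levellised (le : Fin N → Fin N → Prop) (t : Fin N) : Prop :=
  ∀ i j : Fin N, 0 < (i : ℕ) → (i : ℕ) ≤ (j : ℕ) → dep le t i ≤ dep le t j

def lt' (le : Fin N → Fin N → Prop) (a b : Fin N) : Prop := le a b ∧ a ≠ b

/-- `b` covers `a`. -/
def CovByRel (le : Fin N → Fin N → Prop) (a b : Fin N) : Prop :=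
  lt' le a b ∧ ∀ x, lt' le a x → lt' le x b → False

/-- The covering set of `a`. -/
def cov (le : Fin N → Fin N → Prop) (a : Fin N) : Set (Fin N) := {b | CovByRel le a b}

/-- The up-set of `A`. -/
def upset (le : Fin N → Fin N → Prop) (A : Set (Fin N)) : Set (Fin N) :=
  {x | ∃ a ∈ A, le a x}

def AntichainRel (le : Fin N → Fin N → Prop) (A : Set (Fin N)) : Prop :=
  ∀ a ∈ A, ∀ b ∈ A, a ≠ b → ¬ le a b

/-- Binary weight of a set of labels. -/
noncomputable def wt (A : Set (Fin N)) : ℕ :=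
  ∑ j : Fin N, A.indicator (fun j => 2 ^ (j : ℕ)) j

/-- `z` is a bottom and `o` a top for `le`. -/
def Bounds (le : Fin N → Fin N → Prop) (z o : Fin N) : Prop :=
  (∀ a, le z a) ∧ (∀ a, le a o)

/-- The order obtained from `le` by adding `m` new atoms, the `i`-th having covering set `A i`. -/
def extLe {n m : ℕ} (le : Fin n → Fin n → Prop) (A : Fin m → Set (Fin n)) :
    Fin (n + m) → Fin (n + m) → Prop := fun x y =>
  if hx : (x : ℕ) < n then
    if hy : (y : ℕ) < n then le ⟨x, hx⟩ ⟨y, hy⟩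
    else (x : ℕ) = 0
  else
    if hy : (y : ℕ) < n then
      (⟨y, hy⟩ : Fin n) ∈ upset le (A ⟨(x : ℕ) - n, by have := x.isLt; omega⟩)
    else x = y

/-- The relabelled order `π(L)`. -/
def permLe {n : ℕ} (π : Equiv.Perm (Fin n)) (le : Fin n → Fin n → Prop) :
    Fin n → Fin n → Prop := fun a b => le (π.symm a) (π.symm b)


/-- The weight of the part of the covering set of `i` lying on level `d`. -/
noncomputable def covwt {N : ℕ} (le : Fin N → Fin N → Prop) (t : Fin N) (d : ℕ)
    (i : Fin N) : ℕ :=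
  wt (cov le i ∩ lev le t d)

/-- The level-major order on levellised labelled lattices: `L₁ < L₂` iff at the first
position — blocks of elements ordered by increasing depth, within a block levels `d`
of the covering sets in decreasing order, within a level elements in increasing label
order — the covering weight of `L₁` is smaller than that of `L₂`. -/
noncomputable def ltLM {N : ℕ} (L₁ L₂ : Lattice (Fin N)) (t : Fin N) : Prop :=
  ∃ (i : Fin N) (d : ℕ), 0 < (i : ℕ) ∧ 1 ≤ d ∧ d < dep L₁.le t i ∧
    covwt L₁.le t d i < covwt L₂.le t d i ∧
    ∀ (j : Fin N) (e : ℕ), 0 < (j : ℕ) → 1 ≤ e → e < dep L₁.le t j →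
      (dep L₁.le t j < dep L₁.le t i ∨
        (dep L₁.le t j = dep L₁.le t i ∧ d < e) ∨
        (dep L₁.le t j = dep L₁.le t i ∧ e = d ∧ (j : ℕ) < (i : ℕ))) →
      covwt L₁.le t e j = covwt L₂.le t e j

theorem isPartialOrder_le {α : Type*} (P : PartialOrder α) : IsPartialOrder α P.le where
  refl := P.le_refl
  trans := P.le_trans
  antisymm := P.le_antisymm

section Depth

variable {le le₁ le₂ : Fin N → Fin N → Prop}

def chainLengths (le : Fin N → Fin N → Prop) (t a : Fin N) : Set ℕ :=
  {k | ∃ l : List (Fin N), List.IsChain (fun x y => le y x ∧ y ≠ x) l ∧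
    l.head? = some t ∧ l.getLast? = some a ∧ l.length = k + 1}

theorem dep_eq_sSup_chainLengths (t a : Fin N) : dep le t a = sSup (chainLengths le t a) := rfl

theorem mem_chainLengths_self (t : Fin N) : 0 ∈ chainLengths le t t :=
  ⟨[t], List.isChain_singleton t, rfl, rfl, rfl⟩

theorem succ_mem_chainLengths {t c x : Fin N} {k : ℕ} (hk : k ∈ chainLengths le t c)
    (hxc : le x c) (hne : x ≠ c) : k + 1 ∈ chainLengths le t x := by
  obtain ⟨l, hl, hhead, hlast, hlen⟩ := hk
  have hl₀ : l ≠ [] := by rintro rfl; simp at hhead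
  refine ⟨l ++ [x], ?_, by rw [List.head?_append_of_ne_nil _ hl₀, hhead], by simp,
    by simp [hlen]⟩
  refine List.isChain_append.2 ⟨hl, List.isChain_singleton x, fun a ha b hb => ?_⟩
  obtain rfl : c = a := by simpa [hlast] using ha
  obtain rfl : x = b := by simpa using hb
  exact ⟨hxc, hne⟩

theorem mem_chainLengths_map {f : Fin N → Fin N} (hf : Function.Injective f)
    (hle : ∀ x y, le₁ x y → le₂ (f x) (f y)) {t a : Fin N} {k : ℕ}
    (hk : k ∈ chainLengths le₁ t a) : k ∈ chainLengths le₂ (f t) (f a) := by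
  obtain ⟨l, hl, hhead, hlast, hlen⟩ := hk
  refine ⟨l.map f, ?_, by simp [hhead], by simp [hlast], by simp [hlen]⟩
  exact List.isChain_map f |>.2 <| hl.imp fun x y h => ⟨hle y x h.1, hf.ne h.2⟩

variable [IsPartialOrder (Fin N) le]

theorem lt'_trans {a b c : Fin N} (hab : lt' le a b) (hbc : lt' le b c) : lt' le a c :=
  ⟨trans_of le hab.1 hbc.1, fun hac => hab.2 <| by subst hac; exact antisymm hab.1 hbc.1⟩

/-- Strictly descending chains have no repetitions, so they have at most `N` elements. -/
theorem succ_le_of_mem_chainLengths {t a : Fin N} {k : ℕ} (hk : k ∈ chainLengths le t a) :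
    k + 1 ≤ N := by
  obtain ⟨l, hl, -, -, hlen⟩ := hk
  have : IsTrans (Fin N) (fun x y => le y x ∧ y ≠ x) :=
    ⟨fun _ _ _ hab hbc => lt'_trans hbc hab⟩
  have hnodup : l.Nodup := (List.isChain_iff_pairwise.1 hl).imp fun h => h.2.symm
  simpa [hlen] using hnodup.length_le_card

theorem bddAbove_chainLengths (t a : Fin N) : BddAbove (chainLengths le t a) :=
  ⟨N, fun _ hk => (Nat.le_succ _).trans (succ_le_of_mem_chainLengths hk)⟩

theorem dep_mem_chainLengths {t a : Fin N} (hat : le a t) :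
    dep le t a ∈ chainLengths le t a := by
  refine Nat.sSup_mem ?_ (bddAbove_chainLengths t a)
  rcases eq_or_ne a t with rfl | hne
  · exact ⟨0, mem_chainLengths_self a⟩
  · exact ⟨1, succ_mem_chainLengths (mem_chainLengths_self t) hat hne⟩

theorem dep_lt_dep {t c x : Fin N} (hct : le c t) (hxc : le x c) (hne : x ≠ c) :
    dep le t c < dep le t x :=
  le_csSup (bddAbove_chainLengths t x) (succ_mem_chainLengths (dep_mem_chainLengths hct) hxc hne)

end Depth

theorem dep_permLe (π : Equiv.Perm (Fin N)) (le : Fin N → Fin N → Prop) (t a : Fin N) :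
    dep (permLe π le) t a = dep le (π.symm t) (π.symm a) := by
  rw [dep_eq_sSup_chainLengths, dep_eq_sSup_chainLengths]
  refine congrArg sSup (Set.ext fun k => ⟨mem_chainLengths_map π.symm.injective
    fun _ _ h => h, fun hk => ?_⟩)
  simpa using mem_chainLengths_map π.injective (le₂ := permLe π le)
    (fun x y h => by simpa [permLe] using h) hk

theorem Levellised.monotone {le : Fin N → Fin N → Prop} {t : Fin N} (h : Levellised le t) :
    Monotone fun i : Fin N => if (i : ℕ) = 0 then 0 else dep le t i := by
  intro i j hij
  have hij' : (i : ℕ) ≤ j := hij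
  dsimp only
  split_ifs with hi hj hj
  · exact le_rfl
  · exact Nat.zero_le _
  · omega
  · exact h i j (Nat.pos_of_ne_zero hi) hij'

/-- A relabelling fixing the top and the bottom permutes the depths of the nonzero labels. Giving
label `0` depth `0` makes both depth sequences monotone, and a monotone rearrangement of a sequence
is unique. -/
theorem dep_eq_of_iso {le₁ le₂ : Fin N → Fin N → Prop} [IsPartialOrder (Fin N) le₁]
    {z o : Fin N} (hz : (z : ℕ) = 0) (hB₁ : Bounds le₁ z o) (hL₁ : Levellised le₁ o)
    (hB₂ : Bounds le₂ z o) (hL₂ : Levellised le₂ o) {π : Equiv.Perm (Fin N)}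
    (hiso : ∀ x y, le₂ x y ↔ permLe π le₁ x y) (j : Fin N) (hj : 0 < (j : ℕ)) :
    dep le₂ o j = dep le₁ o j := by
  obtain rfl : le₂ = permLe π le₁ := funext₂ fun x y => propext (hiso x y)
  have hπo : π.symm o = o := antisymm (hB₁.2 _) (by simpa [permLe] using hB₂.2 (π o))
  have hπz : π.symm z = z := antisymm (by simpa [permLe] using hB₂.1 (π z)) (hB₁.1 _)
  have hzero : ∀ i : Fin N, (π.symm i : ℕ) = 0 ↔ (i : ℕ) = 0 := fun i => by
    rw [← hz, ← Fin.ext_iff, ← Fin.ext_iff, π.symm_apply_eq, ← π.symm_apply_eq.1 hπz]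
  set f : Fin N → ℕ := fun i => if (i : ℕ) = 0 then 0 else dep le₁ o i
  have hf : f ∘ π.symm = fun i : Fin N => if (i : ℕ) = 0 then 0 else dep (permLe π le₁) o i := by
    ext i
    simp only [f, Function.comp_apply, hzero, dep_permLe, hπo]
  have hmono₁ : Monotone (f ∘ (1 : Equiv.Perm (Fin N))) := hL₁.monotone
  have hmono₂ : Monotone (f ∘ π.symm) := hf ▸ hL₂.monotone
  have := congrFun (Tuple.unique_monotone hmono₁ hmono₂) j
  rw [hf] at this
  simpa [f, hj.ne'] using this.symm

section Covers

variable {le le₁ le₂ : Fin N → Fin N → Prop}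

theorem exists_cov [IsPartialOrder (Fin N) le] {x y : Fin N} (hxy : le x y) (hne : x ≠ y) :
    ∃ c, CovByRel le x c ∧ le c y := by
  have : IsTrans (Fin N) (lt' le) := ⟨fun _ _ _ => lt'_trans⟩
  have : Std.Irrefl (lt' le) := ⟨fun _ h => h.2 rfl⟩
  obtain ⟨c, ⟨hxc, hcy⟩, hmin⟩ := (Finite.wellFounded_of_trans_of_irrefl (lt' le)).has_min
    {w | lt' le x w ∧ le w y} ⟨y, ⟨hxy, hne⟩, refl_of le y⟩
  exact ⟨c, ⟨hxc, fun w hxw hwc => hmin w ⟨hxw, trans_of le hwc.1 hcy⟩ hwc⟩, hcy⟩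

theorem top_mem_cov_iff [IsPartialOrder (Fin N) le] {o x : Fin N} (ho : ∀ a, le a o) :
    o ∈ cov le x ↔ x ≠ o ∧ ∀ c ∈ cov le x, c = o := by
  refine ⟨fun h => ⟨h.1.2, fun c hc => by_contra fun hco => h.2 c hc.1 ⟨ho c, hco⟩⟩,
    fun ⟨hxo, h⟩ => ?_⟩
  obtain ⟨c, hc, -⟩ := exists_cov (ho x) hxo
  exact h c hc ▸ hc

theorem mem_cov_of_levels_subset [IsPartialOrder (Fin N) le₁] {o x b : Fin N}
    (ho : ∀ a, le₁ a o)
    (hlev : ∀ e, 1 ≤ e → e < dep le₁ o x → cov le₁ x ∩ lev le₁ o e ⊆ cov le₂ x)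
    (hb : b ∈ cov le₁ x) (hbo : b ≠ o) : b ∈ cov le₂ x :=
  hlev (dep le₁ o b) (Nat.one_le_of_lt (dep_lt_dep (ho o) (ho b) hbo))
    (dep_lt_dep (ho b) hb.1.1 hb.1.2) ⟨hb, rfl⟩

/-- Every cover of `x` other than the top lies on a level `1 ≤ e < dep x`, and the top is a cover
exactly when it is the only one. -/
theorem cov_eq_of_levels_eq [IsPartialOrder (Fin N) le₁] [IsPartialOrder (Fin N) le₂]
    {o x : Fin N} (ho₁ : ∀ a, le₁ a o) (ho₂ : ∀ a, le₂ a o)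
    (hdep : dep le₂ o x = dep le₁ o x)
    (hlev : ∀ e, 1 ≤ e → e < dep le₁ o x → cov le₁ x ∩ lev le₁ o e = cov le₂ x ∩ lev le₂ o e) :
    cov le₁ x = cov le₂ x := by
  have hne_top : ∀ b ≠ o, b ∈ cov le₁ x ↔ b ∈ cov le₂ x := fun b hbo =>
    ⟨fun hb => mem_cov_of_levels_subset ho₁
      (fun e he hex => (hlev e he hex).trans_subset Set.inter_subset_left) hb hbo,
     fun hb => mem_cov_of_levels_subset ho₂
      (fun e he hex => (hlev e he (hdep ▸ hex)).symm.trans_subset Set.inter_subset_left) hb hbo⟩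
  ext b
  rcases eq_or_ne b o with rfl | hbo
  · rw [top_mem_cov_iff ho₁, top_mem_cov_iff ho₂]
    refine and_congr_right fun _ => forall_congr' fun c => ?_
    by_cases hc : c = b <;> simp [hc, hne_top c]
  · exact hne_top b hbo

theorem le_of_cov_eq [IsPartialOrder (Fin N) le₁] [IsPartialOrder (Fin N) le₂] {z o : Fin N}
    (hz : (z : ℕ) = 0) (ho₁ : ∀ a, le₁ a o) (hz₂ : ∀ a, le₂ z a)
    (hcov : ∀ x : Fin N, 0 < (x : ℕ) → cov le₁ x = cov le₂ x) (x y : Fin N) (hxy : le₁ x y) :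
    le₂ x y := by
  rcases eq_or_ne x y with rfl | hne
  · exact refl_of le₂ x
  rcases Nat.eq_zero_or_pos x with hx | hx
  · exact Fin.ext (hx.trans hz.symm) ▸ hz₂ y
  obtain ⟨c, hc, hcy⟩ := exists_cov hxy hne
  have : dep le₁ o c < dep le₁ o x := dep_lt_dep (ho₁ c) hc.1.1 hc.1.2
  exact trans_of le₂ (hcov x hx ▸ hc : c ∈ cov le₂ x).1.1 (le_of_cov_eq hz ho₁ hz₂ hcov c y hcy)
termination_by dep le₁ o x

end Covers

theorem wt_eq_sum_map_val (A : Set (Fin N)) [DecidablePred (· ∈ A)] :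
    wt A = ∑ i ∈ (Finset.univ.filter (· ∈ A)).map Fin.valEmbedding, 2 ^ i := by
  simp [wt, Finset.sum_filter, Set.indicator_apply]

theorem wt_injective : Function.Injective (wt (N := N)) := by
  classical
  intro A B h
  rw [wt_eq_sum_map_val, wt_eq_sum_map_val] at h
  have := Finset.map_injective _ (Finset.geomSum_injective le_rfl h)
  ext a
  simpa using congr(a ∈ $this)

section LevelMajor

/-- Positions `(j, e)` — label `j` of depth `D j`, level `e` of its covering set — are ordered
as in `ltLM`: by increasing depth, then decreasing level, then increasing label. -/
def lmKey (D : Fin N → ℕ) (j : Fin N) (e : ℕ) : ℕ ×ₗ ℕᵒᵈ ×ₗ Fin N :=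
  toLex (D j, toLex (OrderDual.toDual e, j))

theorem lmKey_lt_lmKey_iff {D : Fin N → ℕ} {i j : Fin N} {d e : ℕ} :
    lmKey D j e < lmKey D i d ↔
      D j < D i ∨ (D j = D i ∧ d < e) ∨ (D j = D i ∧ e = d ∧ (j : ℕ) < (i : ℕ)) := by
  simp [lmKey, Prod.Lex.toLex_lt_toLex, and_or_left]

def lmPositions (D : Fin N → ℕ) : Set (ℕ ×ₗ ℕᵒᵈ ×ₗ Fin N) :=
  {k | ∃ (j : Fin N) (e : ℕ), 0 < (j : ℕ) ∧ 1 ≤ e ∧ e < D j ∧ lmKey D j e = k}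

theorem lmKey_mem_lmPositions {D : Fin N → ℕ} {j : Fin N} {e : ℕ} (hj : 0 < (j : ℕ))
    (he : 1 ≤ e) (hej : e < D j) : lmKey D j e ∈ lmPositions D :=
  ⟨j, e, hj, he, hej, rfl⟩

instance (D : Fin N → ℕ) : Finite (lmPositions D) :=
  Set.Finite.to_subtype <| (Set.finite_range fun p : Σ j, Fin (D j) => lmKey D p.1 p.2).subset
    fun _ ⟨j, e, _, _, he, hk⟩ => ⟨⟨j, ⟨e, he⟩⟩, hk⟩

/-- The covering weights `covwt le t e j`, indexed by the positions `(j, e)` in level-major order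
and compared lexicographically. -/
noncomputable def covwtLex (D : Fin N → ℕ) (le : Fin N → Fin N → Prop) (t : Fin N) :
    Lex (lmPositions D → ℕ) :=
  toLex fun k => covwt le t (OrderDual.ofDual (ofLex (ofLex k.1).2).1) (ofLex (ofLex k.1).2).2

theorem ltLM_iff_covwtLex_lt {L₁ L₂ : Lattice (Fin N)} {t : Fin N} {D : Fin N → ℕ}
    (hD : ∀ j : Fin N, 0 < (j : ℕ) → dep L₁.le t j = D j) :
    ltLM L₁ L₂ t ↔ covwtLex D L₁.le t < covwtLex D L₂.le t := by
  constructor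
  · rintro ⟨i, d, hi, hd, hdi, hlt, hprev⟩
    refine ⟨⟨lmKey D i d, lmKey_mem_lmPositions hi hd (hD i hi ▸ hdi)⟩, ?_, hlt⟩
    rintro ⟨_, j, e, hj, he, hej, rfl⟩ hji
    replace hji : lmKey D j e < lmKey D i d := hji
    rw [lmKey_lt_lmKey_iff, ← hD i hi, ← hD j hj] at hji
    exact hprev j e hj he (hD j hj ▸ hej) hji
  · rintro ⟨⟨_, i, d, hi, hd, hdi, rfl⟩, hprev, hlt⟩
    refine ⟨i, d, hi, hd, hD i hi ▸ hdi, hlt, fun j e hj he hej hji => ?_⟩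
    refine hprev ⟨lmKey D j e, lmKey_mem_lmPositions hj he (hD j hj ▸ hej)⟩ ?_
    show lmKey D j e < lmKey D i d
    rwa [lmKey_lt_lmKey_iff, ← hD i hi, ← hD j hj]

theorem le_iff_of_covwtLex_eq {le₁ le₂ : Fin N → Fin N → Prop} [IsPartialOrder (Fin N) le₁]
    [IsPartialOrder (Fin N) le₂] {z o : Fin N} (hz : (z : ℕ) = 0) (hB₁ : Bounds le₁ z o)
    (hB₂ : Bounds le₂ z o) (hdep : ∀ j : Fin N, 0 < (j : ℕ) → dep le₂ o j = dep le₁ o j)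
    (h : covwtLex (dep le₁ o) le₁ o = covwtLex (dep le₁ o) le₂ o) (x y : Fin N) :
    le₁ x y ↔ le₂ x y := by
  have hlev : ∀ x : Fin N, 0 < (x : ℕ) → ∀ e, 1 ≤ e → e < dep le₁ o x →
      cov le₁ x ∩ lev le₁ o e = cov le₂ x ∩ lev le₂ o e := fun x hx e he hex =>
    wt_injective (congrFun h ⟨lmKey _ x e, lmKey_mem_lmPositions hx he hex⟩)
  have hcov : ∀ x : Fin N, 0 < (x : ℕ) → cov le₁ x = cov le₂ x := fun x hx =>
    cov_eq_of_levels_eq hB₁.2 hB₂.2 (hdep x hx) (hlev x hx)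
  exact ⟨le_of_cov_eq hz hB₁.2 hB₂.1 hcov x y,
    le_of_cov_eq hz hB₂.2 hB₁.1 (fun x hx => (hcov x hx).symm) x y⟩

end LevelMajor

/-- the level-major order `<` is transitive and trichotomous on each set of
pairwise-isomorphic levellised `n`-lattices. -/
theorem statement17 {n : ℕ} (hn : 2 ≤ n) :
    (∀ L₁ L₂ L₃ : Lattice (Fin n),
      Bounds L₁.le ⟨0, by omega⟩ ⟨1, by omega⟩ → Levellised L₁.le ⟨1, by omega⟩ →
      Bounds L₂.le ⟨0, by omega⟩ ⟨1, by omega⟩ → Levellised L₂.le ⟨1, by omega⟩ →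
      Bounds L₃.le ⟨0, by omega⟩ ⟨1, by omega⟩ → Levellised L₃.le ⟨1, by omega⟩ →
      (∃ π : Equiv.Perm (Fin n), ∀ x y, L₂.le x y ↔ permLe π L₁.le x y) →
      (∃ π : Equiv.Perm (Fin n), ∀ x y, L₃.le x y ↔ permLe π L₁.le x y) →
      ltLM L₁ L₂ ⟨1, by omega⟩ → ltLM L₂ L₃ ⟨1, by omega⟩ → ltLM L₁ L₃ ⟨1, by omega⟩) ∧
    (∀ L₁ L₂ : Lattice (Fin n),
      Bounds L₁.le ⟨0, by omega⟩ ⟨1, by omega⟩ → Levellised L₁.le ⟨1, by omega⟩ →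
      Bounds L₂.le ⟨0, by omega⟩ ⟨1, by omega⟩ → Levellised L₂.le ⟨1, by omega⟩ →
      (∃ π : Equiv.Perm (Fin n), ∀ x y, L₂.le x y ↔ permLe π L₁.le x y) →
      (ltLM L₁ L₂ ⟨1, by omega⟩ ∨ (∀ x y, L₁.le x y ↔ L₂.le x y) ∨
        ltLM L₂ L₁ ⟨1, by omega⟩)) := by
  refine ⟨fun L₁ L₂ L₃ hB₁ hL₁ hB₂ hL₂ _ _ ⟨π, hπ⟩ _ h₁₂ h₂₃ => ?_,
    fun L₁ L₂ hB₁ hL₁ hB₂ hL₂ ⟨π, hπ⟩ => ?_⟩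
  · have := isPartialOrder_le L₁.toPartialOrder
    have hdep := dep_eq_of_iso rfl hB₁ hL₁ hB₂ hL₂ hπ
    rw [ltLM_iff_covwtLex_lt fun _ _ => rfl] at h₁₂ ⊢
    rw [ltLM_iff_covwtLex_lt hdep] at h₂₃
    exact h₁₂.trans h₂₃
  · have := isPartialOrder_le L₁.toPartialOrder
    have := isPartialOrder_le L₂.toPartialOrder
    have hdep := dep_eq_of_iso rfl hB₁ hL₁ hB₂ hL₂ hπ
    rw [ltLM_iff_covwtLex_lt fun _ _ => rfl, ltLM_iff_covwtLex_lt hdep]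
    exact (lt_trichotomy _ _).imp_right
      (Or.imp_left fun h => le_iff_of_covwtLex_eq rfl hB₁ hB₂ hdep h)

end PaperLattice
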